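/- Let K be an odd integer ≥ 7 and suppose H(K,26) holds: every odd integer N ≥ K is a sum N = q₁ + q₂ + q₃ of primes with |N/3 − qᵢ| ≤ N/26 for each i. Then for every prime p with p > 5K/17, the largest atom u of the additive submonoid of ℕ generated by all primes ≥ p satisfies u < (163/47)·p. -/

import Mathlib

open Real

/-- The additive submonoid of ℕ generated by all primes `q ≥ p`. -/
def Sgen (p : ℕ) : AddSubmonoid ℕ := AddSubmonoid.closure {q : ℕ | q.Prime ∧ p ≤ q}

/-- `a` is an atom of `Sgen p`: nonzero, in `Sgen p`, and not a sum of two nonzero elements. -/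
def IsAtomOf (p a : ℕ) : Prop :=
  a ∈ Sgen p ∧ a ≠ 0 ∧
    ¬ ∃ b c : ℕ, b ∈ Sgen p ∧ c ∈ Sgen p ∧ b ≠ 0 ∧ c ≠ 0 ∧ a = b + c

lemma sgen_classify {p : ℕ} : ∀ x ∈ Sgen p, x = 0 ∨ (x.Prime ∧ p ≤ x) ∨
    ∃ b c : ℕ, b ∈ Sgen p ∧ c ∈ Sgen p ∧ b ≠ 0 ∧ c ≠ 0 ∧ x = b + c := by
  intro x hx
  induction hx using AddSubmonoid.closure_induction with
  | mem x h => exact Or.inr (Or.inl h)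
  | zero => exact Or.inl rfl
  | add x y hx hy ihx ihy =>
    rcases ihx with rfl | hx' | hx'
    · simpa using ihy
    · rcases ihy with rfl | hy' | hy'
      · simp [hx']
      · exact Or.inr (Or.inr ⟨x, y, hx, hy, hx'.1.pos.ne', hy'.1.pos.ne', rfl⟩)
      · exact Or.inr (Or.inr ⟨x, y, hx, hy, hx'.1.pos.ne',
          (by rcases hy' with ⟨b, c, _, _, hb, hc, rfl⟩; positivity), rfl⟩)
    · rcases Nat.eq_zero_or_pos y with rfl | hypos
      · simpa using Or.inr (Or.inr hx')
      · obtain ⟨b, c, hb, hc, hb0, hc0, rfl⟩ := hx'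
        exact Or.inr (Or.inr ⟨b + c, y, AddSubmonoid.add_mem _ hb hc, hy,
          by positivity, hypos.ne', rfl⟩)

lemma atom_is_prime {p a : ℕ} (h : IsAtomOf p a) : a.Prime ∧ p ≤ a := by
  obtain ⟨hmem, hne, hnc⟩ := h
  rcases sgen_classify a hmem with rfl | h' | h'
  · exact absurd rfl hne
  · exact h'
  · exact absurd h' hnc

theorem stmt13 (K : ℕ) (hK : Odd K) (hK7 : 7 ≤ K)
    (HK26 : ∀ N : ℕ, Odd N → K ≤ N →
      ∃ q₁ q₂ q₃ : ℕ, q₁.Prime ∧ q₂.Prime ∧ q₃.Prime ∧ N = q₁ + q₂ + q₃ ∧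
        |(N : ℚ) / 3 - q₁| ≤ (N : ℚ) / 26 ∧ |(N : ℚ) / 3 - q₂| ≤ (N : ℚ) / 26 ∧
        |(N : ℚ) / 3 - q₃| ≤ (N : ℚ) / 26) :
    ∀ p : ℕ, p.Prime → (p : ℚ) > 5 * K / 17 →
      ∀ u : ℕ, IsGreatest {a : ℕ | IsAtomOf p a} u →
        (u : ℚ) < 163 / 47 * p := by
  intro p hp hpK u hGreat
  obtain ⟨huatom, _⟩ := hGreat
  obtain ⟨huprime, hpu⟩ := atom_is_prime huatom
  by_contra hcon
  push_neg at hcon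
  have hKQ : (0:ℚ) ≤ K := by positivity
  have hpQ : (0:ℚ) < p := by
    have := hp.pos; exact_mod_cast this
  -- u ≥ K and u > 2
  have hKu : (K:ℚ) < u := by linarith
  have hKu' : K ≤ u := by exact_mod_cast hKu.le
  have hu2 : 2 < u := by
    have h2p : (2:ℚ) ≤ p := by exact_mod_cast hp.two_le
    have : (2:ℚ) < u := by linarith
    exact_mod_cast this
  have huodd : Odd u := huprime.odd_of_ne_two (by omega)
  obtain ⟨q₁, q₂, q₃, hq1, hq2, hq3, hsum, ha1, ha2, ha3⟩ := HK26 u huodd hKu'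
  have key : ∀ q : ℕ, |(u : ℚ) / 3 - q| ≤ (u : ℚ) / 26 → p ≤ q := by
    intro q ha
    rw [abs_le] at ha
    have : (p:ℚ) < q := by linarith [ha.2]
    exact_mod_cast this.le
  have hm1 : q₁ ∈ Sgen p := AddSubmonoid.subset_closure ⟨hq1, key q₁ ha1⟩
  have hm2 : q₂ ∈ Sgen p := AddSubmonoid.subset_closure ⟨hq2, key q₂ ha2⟩
  have hm3 : q₃ ∈ Sgen p := AddSubmonoid.subset_closure ⟨hq3, key q₃ ha3⟩
  exact huatom.2.2 ⟨q₁ + q₂, q₃, AddSubmonoid.add_mem _ hm1 hm2, hm3,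
    (Nat.add_pos_left hq1.pos q₂).ne', hq3.pos.ne', hsum⟩
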